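/- A bounded complex of Banach spaces over a complete nonarchimedean field is strictly acyclic (i.e., acyclic with all differentials strict morphisms) if and only if it is acyclic. -/

import Mathlib

/-!
STATEMENT 4: A bounded complex of Banach spaces over a complete (nontrivially normed)
field is strictly acyclic (acyclic with all differentials strict morphisms) if and only
if it is acyclic.

A continuous linear map is strict if its corestriction onto its range (with the subspace
topology) is an open map.
-/

/-- A continuous linear map is strict if the induced map onto its range is open. -/
def IsStrictMap {𝕜 : Type*} [NontriviallyNormedField 𝕜] {E F : Type*}
    [NormedAddCommGroup E] [NormedSpace 𝕜 E] [NormedAddCommGroup F] [NormedSpace 𝕜 F]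
    (f : E →L[𝕜] F) : Prop :=
  IsOpenMap (fun x : E => (⟨f x, Set.mem_range_self x⟩ : Set.range f))

theorem stmt4 {𝕜 : Type*} [NontriviallyNormedField 𝕜] [CompleteSpace 𝕜]
    (V : ℤ → Type*) [∀ n, NormedAddCommGroup (V n)] [∀ n, NormedSpace 𝕜 (V n)]
    [∀ n, CompleteSpace (V n)]
    (d : ∀ n, V n →L[𝕜] V (n + 1))
    (hdd : ∀ n x, d (n + 1) (d n x) = 0)
    -- the complex is bounded:
    (hbdd : ∃ a b : ℤ, ∀ n, (n < a ∨ b < n) → ∀ x : V n, x = 0) :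
    -- strictly acyclic ↔ acyclic:
    ((∀ n, LinearMap.range (d n : V n →ₗ[𝕜] V (n + 1)) = LinearMap.ker (d (n + 1) : V (n + 1) →ₗ[𝕜] V (n + 1 + 1))) ∧ ∀ n, IsStrictMap (d n)) ↔
      (∀ n, LinearMap.range (d n : V n →ₗ[𝕜] V (n + 1)) = LinearMap.ker (d (n + 1) : V (n + 1) →ₗ[𝕜] V (n + 1 + 1))) := by
  refine ⟨fun h => h.1, fun h => ⟨h, fun n => ?_⟩⟩
  have hclosed : IsClosed ((LinearMap.range (d n : V n →ₗ[𝕜] V (n + 1)) : Submodule 𝕜 (V (n+1))) : Set (V (n+1))) := by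
    rw [h n]
    exact ContinuousLinearMap.isClosed_ker (d (n+1))
  haveI : CompleteSpace (LinearMap.range (d n : V n →ₗ[𝕜] V (n + 1))) := hclosed.completeSpace_coe
  set g := (d n).codRestrict (LinearMap.range (d n : V n →ₗ[𝕜] V (n + 1))) (fun x => LinearMap.mem_range_self _ x)
    with hg
  have hsurj : Function.Surjective g := by
    rintro ⟨y, x, rfl⟩
    exact ⟨x, rfl⟩
  exact g.isOpenMap hsurj
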